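/- For every α ∈ [0,1] there exists a sequence a : ℕ → ℂ with a_n ∈ {−1, +1} for all n such that the Dirichlet series f(s) = Σ_{n=1}^∞ a_n n^{-s} satisfies σ_a(f) − σ_c(f) = α. (Here necessarily σ_a(f) = 1, so the content is the existence of a ±1 sequence with σ_c(f) = 1 − α.) -/

import Mathlib

open Filter Topology

/-- `N`-th partial sum of the Dirichlet series `∑ a_n n^{-s}` at the point `s`. -/
noncomputable def dirichletPartial (a : ℕ → ℂ) (s : ℂ) (N : ℕ) : ℂ :=
  ∑ n ∈ Finset.range N, a (n + 1) / ((n : ℂ) + 1) ^ s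

/-- The Dirichlet series `∑ a_n n^{-σ}` converges (as a limit of partial sums). -/
def DirichletConvergesAt (a : ℕ → ℂ) (σ : ℝ) : Prop :=
  ∃ l : ℂ, Tendsto (dirichletPartial a (σ : ℂ)) atTop (𝓝 l)

/-- The series `∑ a_n n^{-σ - it}` converges uniformly in `t ∈ ℝ`. -/
def DirichletConvergesUniformlyAt (a : ℕ → ℂ) (σ : ℝ) : Prop :=
  ∃ g : ℝ → ℂ,
    TendstoUniformly (fun N (t : ℝ) => dirichletPartial a ((σ : ℂ) + (t : ℂ) * Complex.I) N) g atTop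

/-- The series `∑ |a_n| n^{-σ}` converges. -/
def DirichletAbsConvergesAt (a : ℕ → ℂ) (σ : ℝ) : Prop :=
  Summable fun n : ℕ => ‖a (n + 1)‖ / ((n : ℝ) + 1) ^ σ

/-- Abscissa of (simple) convergence. -/
noncomputable def sigmaC (a : ℕ → ℂ) : ℝ := sInf {σ : ℝ | DirichletConvergesAt a σ}

/-- Abscissa of uniform convergence. -/
noncomputable def sigmaB (a : ℕ → ℂ) : ℝ := sInf {σ : ℝ | DirichletConvergesUniformlyAt a σ}

/-- Abscissa of absolute convergence. -/
noncomputable def sigmaA (a : ℕ → ℂ) : ℝ := sInf {σ : ℝ | DirichletAbsConvergesAt a σ}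

/-- `a : ℕ → ℂ` is multiplicative: `a 1 = 1` and `a (m n) = a m * a n` for coprime `m, n ≥ 1`. -/
def IsMultiplicativeFun (a : ℕ → ℂ) : Prop :=
  a 1 = 1 ∧ ∀ m n : ℕ, 1 ≤ m → 1 ≤ n → Nat.Coprime m n → a (m * n) = a m * a n

/-- `a : ℕ → ℂ` is completely multiplicative. -/
def IsCompletelyMultiplicativeFun (a : ℕ → ℂ) : Prop :=
  a 1 = 1 ∧ ∀ m n : ℕ, 1 ≤ m → 1 ≤ n → a (m * n) = a m * a n

/-! The coefficients are the steps of a `±1` walk `S` that greedily follows `N ^ θ`, `θ = 1 - α`,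
so that `|S N - N ^ θ| ≤ 1`. Absolute convergence only sees `|a n| = 1`, giving `σ_a = 1`.
Summation by parts against `S N = O(N ^ θ)` gives convergence for `σ > θ`; conversely, bounded
partial sums at some `σ > 0` force `S N = O(N ^ σ)` by summation by parts in the other direction,
and since `S N ≥ N ^ θ - 1` this forces `σ ≥ θ`. Hence `σ_c = θ`. -/

open Finset

noncomputable def greedyWalk (g : ℕ → ℝ) : ℕ → ℝ
  | 0 => 0
  | N + 1 => if greedyWalk g N ≤ g (N + 1) then greedyWalk g N + 1 else greedyWalk g N - 1

lemma greedyWalk_succ_sub (g : ℕ → ℝ) (N : ℕ) :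
    greedyWalk g (N + 1) - greedyWalk g N = 1 ∨ greedyWalk g (N + 1) - greedyWalk g N = -1 := by
  rw [greedyWalk]
  split_ifs <;> simp

lemma abs_greedyWalk_sub_le {g : ℕ → ℝ} (h₀ : |g 0| ≤ 1) (hg : ∀ N, |g (N + 1) - g N| ≤ 1)
    (N : ℕ) : |greedyWalk g N - g N| ≤ 1 := by
  induction N with
  | zero => simpa [greedyWalk] using h₀
  | succ N ih =>
    have hstep := hg N
    rw [abs_le] at ih hstep ⊢
    rw [greedyWalk]
    split_ifs <;> constructor <;> linarith

lemma abs_add_one_rpow_sub_rpow_le {θ x : ℝ} (hx : 0 ≤ x) (hθ₀ : 0 ≤ θ) (hθ₁ : θ ≤ 1) :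
    |(x + 1) ^ θ - x ^ θ| ≤ 1 := by
  have hmono : x ^ θ ≤ (x + 1) ^ θ := Real.rpow_le_rpow hx (by linarith) hθ₀
  have hsub := Real.rpow_add_le_add_rpow hx zero_le_one hθ₀ hθ₁
  rw [Real.one_rpow] at hsub
  rw [abs_of_nonneg (by linarith)]
  linarith

lemma abs_add_one_rpow_neg_sub_le {σ x : ℝ} (hσ : 0 ≤ σ) (hx : 0 < x) :
    |(x + 1) ^ (-σ) - x ^ (-σ)| ≤ σ * x ^ (-σ - 1) := by
  have hpos : ∀ y ∈ Set.Icc x (x + 1), 0 < y := fun y hy => hx.trans_le hy.1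
  have key := (convex_Icc x (x + 1)).norm_image_sub_le_of_norm_hasDerivWithin_le
    (f := fun y : ℝ => y ^ (-σ)) (f' := fun y => -σ * y ^ (-σ - 1)) (C := σ * x ^ (-σ - 1))
    (fun y hy => (Real.hasDerivAt_rpow_const (Or.inl (hpos y hy).ne')).hasDerivWithinAt)
    (fun y hy => by
      rw [norm_mul, norm_neg, Real.norm_of_nonneg hσ,
        Real.norm_of_nonneg (Real.rpow_nonneg (hpos y hy).le _)]
      exact mul_le_mul_of_nonneg_left (Real.rpow_le_rpow_of_nonpos hx hy.1 (by linarith)) hσ)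
    (Set.left_mem_Icc.2 (by linarith)) (Set.right_mem_Icc.2 (by linarith))
  simpa using key

section NormedSpace

variable {E : Type*} [NormedAddCommGroup E]

lemma tendsto_zero_of_tendsto_sum_range {f : ℕ → E} {l : E}
    (h : Tendsto (fun N => ∑ n ∈ range N, f n) atTop (𝓝 l)) : Tendsto f atTop (𝓝 0) := by
  have := (h.comp (tendsto_add_atTop_nat 1)).sub h
  simpa [Function.comp_def, sum_range_succ_sub_sum] using this

lemma exists_tendsto_sum_rpow_neg_smul [NormedSpace ℝ E] [CompleteSpace E] {b : ℕ → E}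
    {θ σ C : ℝ} (hσ : 0 ≤ σ) (hθσ : θ < σ) (hb : ∀ N, ‖∑ n ∈ range N, b n‖ ≤ C * (N : ℝ) ^ θ) :
    ∃ l, Tendsto (fun N => ∑ n ∈ range N, ((n : ℝ) + 1) ^ (-σ) • b n) atTop (𝓝 l) := by
  set w : ℕ → ℝ := fun n => ((n : ℝ) + 1) ^ (-σ)
  set G : ℕ → E := fun N => ∑ n ∈ range N, b n
  have hdiff : ∀ i : ℕ,
      ‖(w (i + 1) - w i) • G (i + 1)‖ ≤ σ * C * ((i : ℝ) + 1) ^ (θ - σ - 1) := by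
    intro i
    have hw : |w (i + 1) - w i| ≤ σ * ((i : ℝ) + 1) ^ (-σ - 1) := by
      simpa [w] using abs_add_one_rpow_neg_sub_le hσ (x := (i : ℝ) + 1) (by positivity)
    have hG : ‖G (i + 1)‖ ≤ C * ((i : ℝ) + 1) ^ θ := by simpa [G] using hb (i + 1)
    calc ‖(w (i + 1) - w i) • G (i + 1)‖
        ≤ σ * ((i : ℝ) + 1) ^ (-σ - 1) * (C * ((i : ℝ) + 1) ^ θ) := by
          rw [norm_smul, Real.norm_eq_abs]
          exact mul_le_mul hw hG (norm_nonneg _) (by positivity)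
      _ = σ * C * ((i : ℝ) + 1) ^ (θ - σ - 1) := by
          rw [show θ - σ - 1 = (-σ - 1) + θ by ring, Real.rpow_add (by positivity)]
          ring
  have hsummable : Summable fun i : ℕ => (w (i + 1) - w i) • G (i + 1) := by
    have hp : Summable fun i : ℕ => ((i : ℝ) + 1) ^ (θ - σ - 1) := by
      simpa using (summable_nat_add_iff 1 (f := fun n : ℕ => (n : ℝ) ^ (θ - σ - 1))).2
        (Real.summable_nat_rpow.2 (by linarith))
    exact .of_norm_bounded (hp.mul_left (σ * C)) hdiff
  have hboundary : Tendsto (fun N => w (N - 1) • G N) atTop (𝓝 0) := by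
    refine squeeze_zero_norm' (a := fun N : ℕ => C * (N : ℝ) ^ (θ - σ)) ?_ ?_
    · filter_upwards [eventually_ge_atTop 1] with N hN
      have hcast : ((N - 1 : ℕ) : ℝ) + 1 = N := by rw [Nat.cast_sub hN]; ring
      have hN' : (0 : ℝ) < N := by exact_mod_cast hN
      simp only [w, G]
      rw [norm_smul, hcast, Real.norm_of_nonneg (by positivity), show θ - σ = -σ + θ by ring,
        Real.rpow_add hN', mul_left_comm]
      exact mul_le_mul_of_nonneg_left (hb N) (by positivity)
    · simpa using ((tendsto_rpow_neg_atTop (by linarith : 0 < σ - θ)).comp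
        tendsto_natCast_atTop_atTop).const_mul C
  refine ⟨0 - ∑' i, (w (i + 1) - w i) • G (i + 1), ?_⟩
  refine (hboundary.sub (hsummable.hasSum.tendsto_sum_nat.comp (tendsto_sub_atTop_nat 1))).congr
    fun N => ?_
  exact (sum_range_by_parts w b N).symm

lemma norm_sum_range_le_of_norm_sum_rpow_neg_smul_le [NormedSpace ℝ E] {b : ℕ → E} {σ M : ℝ}
    (hσ : 0 ≤ σ) (hM : ∀ N, ‖∑ n ∈ range N, ((n : ℝ) + 1) ^ (-σ) • b n‖ ≤ M) (N : ℕ) :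
    ‖∑ n ∈ range N, b n‖ ≤ 2 * M * (N : ℝ) ^ σ := by
  set w : ℕ → ℝ := fun n => ((n : ℝ) + 1) ^ σ
  set P : ℕ → E := fun N => ∑ n ∈ range N, ((n : ℝ) + 1) ^ (-σ) • b n
  have hM₀ : 0 ≤ M := (norm_nonneg _).trans (hM 0)
  rcases Nat.eq_zero_or_pos N with rfl | hN
  · simp only [range_zero, sum_empty, norm_zero, Nat.cast_zero]
    have := Real.rpow_nonneg le_rfl σ
    positivity
  have hcast : ((N - 1 : ℕ) : ℝ) + 1 = N := by rw [Nat.cast_sub hN]; ring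
  have hw : ∀ i, 0 ≤ w (i + 1) - w i := fun i =>
    sub_nonneg.2 (Real.rpow_le_rpow (by positivity) (by push_cast; linarith) hσ)
  have hparts : ∑ n ∈ range N, b n
      = w (N - 1) • P N - ∑ i ∈ range (N - 1), (w (i + 1) - w i) • P (i + 1) := by
    rw [← sum_range_by_parts]
    refine sum_congr rfl fun n _ => ?_
    rw [smul_smul, ← Real.rpow_add (by positivity), add_neg_cancel, Real.rpow_zero, one_smul]
  have htel : ∑ i ∈ range (N - 1), (w (i + 1) - w i) = (N : ℝ) ^ σ - 1 := by
    rw [sum_range_sub]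
    simp [w, hcast]
  calc ‖∑ n ∈ range N, b n‖
      ≤ w (N - 1) * M + ∑ i ∈ range (N - 1), (w (i + 1) - w i) * M := by
        rw [hparts]
        refine (norm_sub_le _ _).trans
          (add_le_add ?_ ((norm_sum_le _ _).trans (sum_le_sum fun i _ => ?_)))
        · rw [norm_smul, Real.norm_of_nonneg (Real.rpow_nonneg (by positivity) _)]
          exact mul_le_mul_of_nonneg_left (hM N) (Real.rpow_nonneg (by positivity) _)
        · rw [norm_smul, Real.norm_of_nonneg (hw i)]
          exact mul_le_mul_of_nonneg_left (hM _) (hw i)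
    _ = M * (2 * (N : ℝ) ^ σ - 1) := by
        rw [← sum_mul, htel]
        simp only [w, hcast]
        ring
    _ ≤ 2 * M * (N : ℝ) ^ σ := by nlinarith

end NormedSpace

lemma le_of_rpow_sub_one_le_mul_rpow {θ σ C : ℝ} (hσ : 0 ≤ σ)
    (h : ∀ N : ℕ, (N : ℝ) ^ θ - 1 ≤ C * (N : ℝ) ^ σ) : θ ≤ σ := by
  by_contra! hlt
  obtain ⟨N, hN₁, hN⟩ := ((eventually_ge_atTop 1).and
    (((tendsto_rpow_atTop (sub_pos.2 hlt)).comp tendsto_natCast_atTop_atTop).eventually_ge_atTop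
      (C + 2))).exists
  have hN₀ : (0 : ℝ) < N := by exact_mod_cast hN₁
  have hσ₁ : 1 ≤ (N : ℝ) ^ σ := Real.one_le_rpow (by exact_mod_cast hN₁) hσ
  have hsplit : (N : ℝ) ^ θ = (N : ℝ) ^ σ * (N : ℝ) ^ (θ - σ) := by
    rw [← Real.rpow_add hN₀]; ring_nf
  have hN' : C + 2 ≤ (N : ℝ) ^ (θ - σ) := hN
  nlinarith [h N, mul_le_mul_of_nonneg_left hN' (zero_le_one.trans hσ₁)]

lemma dirichletPartial_ofReal_eq_sum_smul (a : ℕ → ℂ) (σ : ℝ) :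
    dirichletPartial a σ = fun N => ∑ n ∈ range N, ((n : ℝ) + 1) ^ (-σ) • a (n + 1) := by
  funext N
  refine sum_congr rfl fun n _ => ?_
  rw [Complex.real_smul, Real.rpow_neg (by positivity), Complex.ofReal_inv, ← div_eq_inv_mul,
    Complex.ofReal_cpow (by positivity)]
  push_cast
  rfl

lemma sigmaA_eq_one_of_norm_eq_one {a : ℕ → ℂ} (ha : ∀ n, ‖a (n + 1)‖ = 1) : sigmaA a = 1 := by
  have hset : {σ : ℝ | DirichletAbsConvergesAt a σ} = Set.Ioi 1 := by
    ext σ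
    rw [Set.mem_Ioi, ← Real.summable_one_div_nat_rpow, ← summable_nat_add_iff 1]
    simp [DirichletAbsConvergesAt, ha]
  rw [sigmaA, hset, csInf_Ioi]

lemma pos_of_dirichletConvergesAt {a : ℕ → ℂ} (ha : ∀ n, ‖a (n + 1)‖ = 1) {σ : ℝ}
    (h : DirichletConvergesAt a σ) : 0 < σ := by
  obtain ⟨l, hl⟩ := h
  rw [dirichletPartial_ofReal_eq_sum_smul] at hl
  obtain ⟨n, hn⟩ := ((tendsto_zero_of_tendsto_sum_range hl).norm.eventually_lt_const
    (by norm_num : ‖(0 : ℂ)‖ < 1)).exists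
  by_contra! hσ
  rw [norm_smul, ha, mul_one, Real.norm_of_nonneg (by positivity)] at hn
  exact hn.not_ge (Real.one_le_rpow (by linarith [n.cast_nonneg (α := ℝ)]) (by linarith))

lemma sigmaC_eq_of_norm_eq_one {a : ℕ → ℂ} {θ : ℝ} (hθ : 0 ≤ θ) (ha : ∀ n, ‖a (n + 1)‖ = 1)
    (hS : ∀ N : ℕ, |‖∑ n ∈ range N, a (n + 1)‖ - (N : ℝ) ^ θ| ≤ 1) : sigmaC a = θ := by
  have hconv : ∀ σ, θ < σ → DirichletConvergesAt a σ := by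
    intro σ hσ
    rw [DirichletConvergesAt, dirichletPartial_ofReal_eq_sum_smul]
    refine exists_tendsto_sum_rpow_neg_smul (C := 2) (hθ.trans hσ.le) hσ fun N => ?_
    rcases Nat.eq_zero_or_pos N with rfl | hN
    · simpa using Real.zero_rpow_nonneg θ
    · have := Real.one_le_rpow (Nat.one_le_cast.2 hN) hθ
      linarith [(abs_le.1 (hS N)).2]
  have hle : ∀ σ, DirichletConvergesAt a σ → θ ≤ σ := by
    intro σ hσ
    have hσ₀ := pos_of_dirichletConvergesAt ha hσ
    obtain ⟨l, hl⟩ := hσ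
    rw [dirichletPartial_ofReal_eq_sum_smul] at hl
    obtain ⟨M, hM⟩ := hl.norm.bddAbove_range
    refine le_of_rpow_sub_one_le_mul_rpow hσ₀.le (C := 2 * M) fun N => ?_
    linarith [(abs_le.1 (hS N)).1,
      norm_sum_range_le_of_norm_sum_rpow_neg_smul_le hσ₀.le (fun N => hM ⟨N, rfl⟩) N]
  exact csInf_eq_of_forall_ge_of_forall_gt_exists_lt ⟨θ + 1, hconv _ (by linarith)⟩ hle
    fun w hw => ⟨(θ + w) / 2, hconv _ (by linarith), by linarith⟩

-- `n - 1` truncates, so `greedySigns g 0 = 0`; the Dirichlet series only reads indices `n ≥ 1`.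
noncomputable def greedySigns (g : ℕ → ℝ) (n : ℕ) : ℂ :=
  (greedyWalk g n - greedyWalk g (n - 1) : ℝ)

lemma greedySigns_eq_one_or_neg_one (g : ℕ → ℝ) {n : ℕ} (hn : 1 ≤ n) :
    greedySigns g n = 1 ∨ greedySigns g n = -1 := by
  obtain ⟨m, rfl⟩ := Nat.exists_eq_add_of_le' hn
  rcases greedyWalk_succ_sub g m with h | h <;> simp [greedySigns, h]

lemma norm_greedySigns_succ (g : ℕ → ℝ) (n : ℕ) : ‖greedySigns g (n + 1)‖ = 1 := by
  rcases greedySigns_eq_one_or_neg_one g n.succ_pos with h | h <;> simp [h]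

lemma sum_range_greedySigns_succ (g : ℕ → ℝ) (N : ℕ) :
    ∑ n ∈ range N, greedySigns g (n + 1) = greedyWalk g N := by
  simp only [greedySigns, Nat.add_sub_cancel, ← Complex.ofReal_sum]
  rw [sum_range_sub (greedyWalk g), greedyWalk, sub_zero]

/-- For every `α ∈ [0,1]` there is a `±1`-valued sequence `a` with
`σ_a - σ_c = α` (and necessarily `σ_a = 1`). -/
theorem exists_pm_one_sigmaA_sub_sigmaC_eq (α : ℝ) (hα : α ∈ Set.Icc (0 : ℝ) 1) :
    ∃ a : ℕ → ℂ, (∀ n : ℕ, 1 ≤ n → a n = 1 ∨ a n = -1) ∧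
      sigmaA a - sigmaC a = α ∧ sigmaA a = 1 := by
  obtain ⟨hα₀, hα₁⟩ := hα
  set g : ℕ → ℝ := fun N => (N : ℝ) ^ (1 - α)
  have htrack : ∀ N, |greedyWalk g N - g N| ≤ 1 := by
    refine abs_greedyWalk_sub_le ?_ fun N => ?_
    · simpa [g, abs_of_nonneg (Real.zero_rpow_nonneg _)] using Real.zero_rpow_le_one _
    · simpa [g] using abs_add_one_rpow_sub_rpow_le N.cast_nonneg (by linarith) (by linarith)
  have hA := sigmaA_eq_one_of_norm_eq_one (norm_greedySigns_succ g)
  have hC : sigmaC (greedySigns g) = 1 - α := by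
    refine sigmaC_eq_of_norm_eq_one (by linarith) (norm_greedySigns_succ g) fun N => ?_
    rw [sum_range_greedySigns_succ, Complex.norm_real, Real.norm_eq_abs,
      ← abs_of_nonneg (Real.rpow_nonneg N.cast_nonneg (1 - α))]
    exact (abs_abs_sub_abs_le_abs_sub _ _).trans (htrack N)
  exact ⟨greedySigns g, fun n hn => greedySigns_eq_one_or_neg_one g hn, by rw [hA, hC]; ring, hA⟩
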